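/- The Cartesian product P_4 □ K_{1,3} contains the graph 𝒢₁ as a minor. (This is the content of the paper's Lemma showing P_4 □ K_{1,3} is not projective planar, since 𝒢₁ is a forbidden minor for the projective plane.) -/
import Mathlib

set_option maxHeartbeats 1000000

/-- `H` is a minor of `G`: there is an assignment of pairwise disjoint, connected,
nonempty branch sets in `G` to the vertices of `H`, with an edge of `G` between the
branch sets of any two adjacent vertices of `H`. -/
def SimpleGraph.IsMinorOf {W V : Type*} (H : SimpleGraph W) (G : SimpleGraph V) : Prop :=
  ∃ φ : W → Set V,
    (∀ w, (G.induce (φ w)).Connected) ∧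
    (Pairwise fun w w' => Disjoint (φ w) (φ w')) ∧
    ∀ ⦃w w'⦄, H.Adj w w' → ∃ a ∈ φ w, ∃ b ∈ φ w', G.Adj a b

/-- The graph `𝒢₁`: the Cartesian product `K_{2,3} □ P_2` with the two `P_2`-fiber edges
joining the copies of the two degree-3 vertices of `K_{2,3}` deleted.  Equivalently, two
disjoint copies of `K_{2,3}` together with a perfect matching between their
three-vertex parts. -/
def GraphG1 : SimpleGraph ((Fin 2 ⊕ Fin 3) × Fin 2) :=
  ((completeBipartiteGraph (Fin 2) (Fin 3)) □ (SimpleGraph.pathGraph 2)).deleteEdges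
    {s((Sum.inl 0, 0), (Sum.inl 0, 1)), s((Sum.inl 1, 0), (Sum.inl 1, 1))}

private lemma induce_singleton_connected {V : Type*} [DecidableEq V] (G : SimpleGraph V)
    (a : V) : (G.induce ↑({a} : Finset V)).Connected := by
  rw [Finset.coe_singleton]
  haveI : Nonempty ({a} : Set V) := ⟨⟨a, rfl⟩⟩
  refine ⟨fun x y => ?_⟩
  have : x = y := Subtype.ext (x.2.trans y.2.symm)
  exact this ▸ SimpleGraph.Reachable.refl x

private lemma induce_pair_connected {V : Type*} [DecidableEq V] (G : SimpleGraph V) {a b : V}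
    (h : G.Adj a b) : (G.induce ↑({a, b} : Finset V)).Connected := by
  rw [Finset.coe_insert, Finset.coe_singleton]
  have ha : a ∈ ({a, b} : Set V) := Set.mem_insert _ _
  have hb : b ∈ ({a, b} : Set V) := Set.mem_insert_of_mem _ rfl
  haveI : Nonempty ({a, b} : Set V) := ⟨⟨a, ha⟩⟩
  have key : ∀ x : ({a, b} : Set V), x = ⟨a, ha⟩ ∨ x = ⟨b, hb⟩ := by
    rintro ⟨x, hx⟩
    rcases hx with hx | hx
    · exact Or.inl (Subtype.ext hx)
    · exact Or.inr (Subtype.ext hx)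
  have e : (G.induce {a, b}).Adj ⟨a, ha⟩ ⟨b, hb⟩ := h
  refine ⟨fun x y => ?_⟩
  rcases key x with rfl | rfl <;> rcases key y with rfl | rfl
  · exact SimpleGraph.Reachable.refl _
  · exact e.reachable
  · exact e.symm.reachable
  · exact SimpleGraph.Reachable.refl _

/-- The branch sets: the two hub vertices of each copy of `K_{2,3}` map to the star
centers at path positions `0, 1` (copy `0`) and `3, 2` (copy `1`); the `j`-th matched
vertex of copy `0` maps to leaves `j` at positions `0, 1`, and of copy `1` to leaves `j`
at positions `2, 3`. -/
private def brF : (Fin 2 ⊕ Fin 3) × Fin 2 → Finset (Fin 4 × (Fin 1 ⊕ Fin 3))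
  | (Sum.inl 0, 0) => {(0, Sum.inl 0)}
  | (Sum.inl 1, 0) => {(1, Sum.inl 0)}
  | (Sum.inl 0, 1) => {(3, Sum.inl 0)}
  | (Sum.inl 1, 1) => {(2, Sum.inl 0)}
  | (Sum.inr j, 0) => {(0, Sum.inr j), (1, Sum.inr j)}
  | (Sum.inr j, 1) => {(2, Sum.inr j), (3, Sum.inr j)}

/-- The Cartesian product `P_4 □ K_{1,3}` contains `𝒢₁` as a minor. -/
theorem p4_boxProd_k13_hasMinor_G1 :
    GraphG1.IsMinorOf
      ((SimpleGraph.pathGraph 4) □ (completeBipartiteGraph (Fin 1) (Fin 3))) := by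
  refine ⟨fun w => ↑(brF w), ?_, ?_, ?_⟩
  · intro w
    fin_cases w <;>
      first
      | exact induce_singleton_connected _ _
      | · apply induce_pair_connected
          rw [SimpleGraph.boxProd_adj]
          left
          exact ⟨by rw [SimpleGraph.pathGraph_adj]; decide, rfl⟩
  · have key : ∀ w w' : (Fin 2 ⊕ Fin 3) × Fin 2, w ≠ w' → Disjoint (brF w) (brF w') := by
      decide
    intro w w' hne
    exact Finset.disjoint_coe.mpr (key w w' hne)
  · intro w w' hadj
    have h : GraphG1.Adj w w' := hadj
    rw [GraphG1, SimpleGraph.deleteEdges_adj, SimpleGraph.boxProd_adj] at h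
    fin_cases w <;> fin_cases w' <;>
      simp_all [brF, SimpleGraph.boxProd_adj, SimpleGraph.pathGraph_adj]
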